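/- Let P = conv(S) + cone(R) with S, R ⊆ R^n finite and S nonempty. Then P⁺⁺ = conv(S ∪ {0}) + cone(R). -/

import Mathlib

open RealInnerProductSpace Pointwise

noncomputable def polarP {n : ℕ} (P : Set (EuclideanSpace ℝ (Fin n))) :
    Set (EuclideanSpace ℝ (Fin n)) :=
  {z | ∀ x ∈ P, 1 + ⟪z, x⟫ ≥ 0}

noncomputable def coneOf {n : ℕ} (R : Finset (EuclideanSpace ℝ (Fin n))) :
    Set (EuclideanSpace ℝ (Fin n)) :=
  {x | ∃ μ : EuclideanSpace ℝ (Fin n) → ℝ, (∀ r, 0 ≤ μ r) ∧ x = ∑ r ∈ R, μ r • r}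

/-! The polars of `P = conv S + cone R` and `Q = conv (S ∪ {0}) + cone R` coincide: a `w ∈ P⁺` is
nonnegative on `R`, since the rays `s + t • r` lie in `P`, and `1 + ⟪w, 0⟫ ≥ 0` holds trivially.
`Q` is closed (a compact set plus a finitely generated cone, which by the conic Carathéodory
theorem is a finite union of linear images of orthants), convex and contains `0`, so separating
a point from `Q` by a hyperplane shows `Q⁺⁺ = Q`. -/

open Set Finset

namespace PointedCone

section Caratheodory

variable {𝕜 M : Type*} [Field 𝕜] [LinearOrder 𝕜] [IsStrictOrderedRing 𝕜]
  [AddCommGroup M] [Module 𝕜 M] {x : M}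

lemma mem_hull_finset_iff {s : Finset M} :
    x ∈ hull 𝕜 (s : Set M) ↔ ∃ μ : M → 𝕜, (∀ y ∈ s, 0 ≤ μ y) ∧ ∑ y ∈ s, μ y • y = x := by
  classical
  rw [Submodule.mem_span_finset]
  constructor
  · rintro ⟨f, -, rfl⟩
    exact ⟨fun y => f y, fun y _ => (f y).2, rfl⟩
  · rintro ⟨μ, hμ, rfl⟩
    refine ⟨fun y => if hy : y ∈ s then ⟨μ y, hμ y hy⟩ else 0, fun y hy => ?_, ?_⟩
    · by_contra hys
      exact hy (dif_neg hys)
    · refine Finset.sum_congr rfl fun y hy => ?_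
      simp only [dif_pos hy]
      rfl

lemma exists_mem_hull_erase_of_not_linearIndepOn [DecidableEq M] {s : Finset M}
    (hs : ¬LinearIndepOn 𝕜 id (s : Set M)) (hx : x ∈ hull 𝕜 (s : Set M)) :
    ∃ y ∈ s, x ∈ hull 𝕜 (s.erase y : Set M) := by
  obtain ⟨μ, hμ, rfl⟩ := mem_hull_finset_iff.1 hx
  obtain ⟨c, hc, y, hy, hcy⟩ : ∃ c : M → 𝕜, ∑ y ∈ s, c y • y = 0 ∧ ∃ y ∈ s, 0 < c y := by
    obtain ⟨c, hc, y, hy, hcy⟩ := not_linearIndepOn_finset_iff.1 hs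
    rcases hcy.lt_or_gt with hneg | hpos
    · refine ⟨-c, ?_, y, hy, neg_pos.2 hneg⟩
      simpa only [Pi.neg_apply, neg_smul, sum_neg_distrib, neg_eq_zero, id] using hc
    · exact ⟨c, hc, y, hy, hpos⟩
  -- Push the coefficients along `c` until the first one vanishes.
  obtain ⟨y₀, hy₀, hmin⟩ := (s.filter fun y => 0 < c y).exists_min_image (fun y => μ y / c y)
    ⟨y, mem_filter.2 ⟨hy, hcy⟩⟩
  rw [mem_filter] at hy₀
  set θ := μ y₀ / c y₀
  have hθ : 0 ≤ θ := div_nonneg (hμ y₀ hy₀.1) hy₀.2.le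
  refine ⟨y₀, hy₀.1, mem_hull_finset_iff.2 ⟨fun y => μ y - θ * c y, fun y hy => ?_, ?_⟩⟩
  · have hys := mem_of_mem_erase hy
    rcases le_or_gt (c y) 0 with hc0 | hc0
    · nlinarith [hμ y hys]
    · have := hmin y (mem_filter.2 ⟨hys, hc0⟩)
      rw [le_div_iff₀ hc0] at this
      linarith
  · calc ∑ y ∈ s.erase y₀, (μ y - θ * c y) • y = ∑ y ∈ s, (μ y - θ * c y) • y :=
          sum_erase _ (by simp [θ, hy₀.2.ne'])
      _ = ∑ y ∈ s, μ y • y := by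
          simp only [sub_smul, mul_smul, sum_sub_distrib, ← smul_sum, hc, smul_zero, sub_zero]

theorem exists_linearIndepOn_subset_of_mem_hull {s : Finset M} (hx : x ∈ hull 𝕜 (s : Set M)) :
    ∃ t ⊆ s, LinearIndepOn 𝕜 id (t : Set M) ∧ x ∈ hull 𝕜 (t : Set M) := by
  classical
  induction s using Finset.strongInduction with
  | H s ih =>
    by_cases hs : LinearIndepOn 𝕜 id (s : Set M)
    · exact ⟨s, subset_rfl, hs, hx⟩
    obtain ⟨y, hy, hxy⟩ := exists_mem_hull_erase_of_not_linearIndepOn hs hx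
    obtain ⟨t, hts, ht, hxt⟩ := ih _ (erase_ssubset hy) hxy
    exact ⟨t, hts.trans (erase_subset y s), ht, hxt⟩

end Caratheodory

section Closed

variable {E : Type*} [AddCommGroup E] [Module ℝ E] [TopologicalSpace E] [IsTopologicalAddGroup E]
  [ContinuousSMul ℝ E] [T2Space E]

lemma isClosed_hull_range_of_linearIndependent {ι : Type*} [Fintype ι] {v : ι → E}
    (hv : LinearIndependent ℝ v) : IsClosed (hull ℝ (range v) : Set E) := by
  have hemb : Topology.IsClosedEmbedding (Fintype.linearCombination ℝ v) :=
    LinearMap.isClosedEmbedding_of_injective <| LinearMap.ker_eq_bot.2 <|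
      linearIndependent_iff_injective_fintypeLinearCombination.1 hv
  have himage : (hull ℝ (range v) : Set E) = Fintype.linearCombination ℝ v '' Ici 0 := by
    ext x
    simp only [SetLike.mem_coe, Submodule.mem_span_range_iff_exists_fun, Set.mem_image, Set.mem_Ici,
      Fintype.linearCombination_apply]
    constructor
    · rintro ⟨c, rfl⟩
      exact ⟨fun i => c i, fun i => (c i).2, rfl⟩
    · rintro ⟨c, hc, rfl⟩
      exact ⟨fun i => ⟨c i, hc i⟩, rfl⟩
  rw [himage]
  exact hemb.isClosedMap _ isClosed_Ici

theorem isClosed_hull_of_finite {s : Set E} (hs : s.Finite) : IsClosed (hull ℝ s : Set E) := by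
  classical
  lift s to Finset E using hs
  have hunion : (hull ℝ (s : Set E) : Set E) =
      ⋃ t ∈ s.powerset.filter (fun t : Finset E => LinearIndepOn ℝ id (t : Set E)),
        (hull ℝ (t : Set E) : Set E) := by
    refine Subset.antisymm (fun x hx => ?_) (iUnion₂_subset fun t ht => ?_)
    · obtain ⟨t, hts, ht, hxt⟩ := exists_linearIndepOn_subset_of_mem_hull hx
      exact mem_biUnion (mem_filter.2 ⟨mem_powerset.2 hts, ht⟩) hxt
    · exact Submodule.span_mono (coe_subset.2 (mem_powerset.1 (mem_filter.1 ht).1))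
  rw [hunion]
  refine isClosed_biUnion_finset fun t ht => ?_
  simpa using isClosed_hull_range_of_linearIndependent (mem_filter.1 ht).2

end Closed

end PointedCone

section Polar

variable {n : ℕ}

local notation "E" => EuclideanSpace ℝ (Fin n)

lemma coneOf_eq_hull (R : Finset E) : coneOf R = (PointedCone.hull ℝ (R : Set E) : Set E) := by
  ext x
  rw [SetLike.mem_coe, PointedCone.mem_hull_finset_iff]
  constructor
  · rintro ⟨μ, hμ, rfl⟩
    exact ⟨μ, fun r _ => hμ r, rfl⟩
  · rintro ⟨μ, hμ, rfl⟩
    refine ⟨fun r => max (μ r) 0, fun r => le_max_right _ _, Finset.sum_congr rfl fun r hr => ?_⟩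
    simp only [max_eq_left (hμ r hr)]

lemma isClosed_coneOf (R : Finset E) : IsClosed (coneOf R) :=
  coneOf_eq_hull R ▸ PointedCone.isClosed_hull_of_finite R.finite_toSet

lemma convex_coneOf (R : Finset E) : Convex ℝ (coneOf R) :=
  coneOf_eq_hull R ▸ PointedCone.convex _

lemma zero_mem_coneOf (R : Finset E) : (0 : E) ∈ coneOf R :=
  coneOf_eq_hull R ▸ zero_mem _

lemma smul_mem_coneOf {R : Finset E} {r : E} {t : ℝ} (ht : 0 ≤ t) (hr : r ∈ R) :
    t • r ∈ coneOf R :=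
  coneOf_eq_hull R ▸ PointedCone.smul_mem _ ht (PointedCone.subset_hull hr)

lemma inner_nonneg_of_mem_coneOf {R : Finset E} {w c : E} (hR : ∀ r ∈ R, 0 ≤ ⟪w, r⟫)
    (hc : c ∈ coneOf R) : 0 ≤ ⟪w, c⟫ := by
  obtain ⟨μ, hμ, rfl⟩ := hc
  rw [inner_sum]
  exact Finset.sum_nonneg fun r hr => by
    rw [real_inner_smul_right]
    exact mul_nonneg (hμ r) (hR r hr)

lemma polarP_antitone {P Q : Set E} (h : P ⊆ Q) : polarP Q ⊆ polarP P :=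
  fun _ hz x hx => hz x (h hx)

lemma subset_polarP_polarP (P : Set E) : P ⊆ polarP (polarP P) :=
  fun x hx z hz => by rw [real_inner_comm]; exact hz x hx

lemma inner_nonneg_of_mem_polarP {P : Set E} {w x r : E} (hw : w ∈ polarP P)
    (hray : ∀ t : ℝ, 0 ≤ t → x + t • r ∈ P) : 0 ≤ ⟪w, r⟫ := by
  by_contra! hneg
  have hx := hw x (by simpa using hray 0 le_rfl)
  set t := (2 + ⟪w, x⟫) / -⟪w, r⟫
  have ht := hw _ (hray t (div_nonneg (by linarith) (by linarith)))
  have htr : t * ⟪w, r⟫ = -(2 + ⟪w, x⟫) := by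
    rw [div_mul_eq_mul_div, div_neg, mul_div_cancel_right₀ _ hneg.ne]
  rw [inner_add_right, real_inner_smul_right, htr] at ht
  linarith

theorem polarP_polarP_subset {Q : Set E} (hclosed : IsClosed Q) (hconv : Convex ℝ Q)
    (hzero : 0 ∈ Q) :
    polarP (polarP Q) ⊆ Q := by
  intro y hy
  by_contra hyQ
  obtain ⟨f, u, hfQ, hfy⟩ := geometric_hahn_banach_closed_point hconv hclosed hyQ
  have hu : 0 < u := by simpa using hfQ 0 hzero
  set z : E := (-u⁻¹) • (InnerProductSpace.toDual ℝ E).symm f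
  have hz : ∀ x, ⟪z, x⟫ = -(f x / u) := fun x => by
    rw [real_inner_smul_left, InnerProductSpace.toDual_symm_apply]
    ring
  have hzQ : z ∈ polarP Q := fun x hx => by
    rw [hz, ge_iff_le, ← sub_eq_add_neg, sub_nonneg, div_le_one hu]
    exact (hfQ x hx).le
  have := hy z hzQ
  rw [real_inner_comm, hz, ge_iff_le, ← sub_eq_add_neg, sub_nonneg, div_le_one hu] at this
  linarith

theorem polarP_convexHull_add_coneOf {S : Finset E} (hS : S.Nonempty) (R : Finset E) :
    polarP (convexHull ℝ (S : Set E) + coneOf R) =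
      polarP (convexHull ℝ ((S : Set E) ∪ {0}) + coneOf R) := by
  refine Set.Subset.antisymm (fun w hw => ?_)
    (polarP_antitone (Set.add_subset_add_right (convexHull_mono Set.subset_union_left)))
  have hadd : ∀ s ∈ S, ∀ c ∈ coneOf R, s + c ∈ convexHull ℝ (S : Set E) + coneOf R :=
    fun s hs c hc => Set.add_mem_add (subset_convexHull ℝ _ hs) hc
  obtain ⟨s₀, hs₀⟩ := hS
  have hR : ∀ r ∈ R, 0 ≤ ⟪w, r⟫ := fun r hr =>
    inner_nonneg_of_mem_polarP hw fun t ht => hadd s₀ hs₀ _ (smul_mem_coneOf ht hr)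
  have hhull : convexHull ℝ ((S : Set E) ∪ {0}) ⊆ {v | -1 ≤ ⟪w, v⟫} := by
    refine convexHull_min (Set.union_subset (fun s hs => ?_) ?_) ?_
    · have := hw s (by simpa using hadd s hs 0 (zero_mem_coneOf R))
      simp only [Set.mem_ofPred_eq]
      linarith
    · simp
    · exact convex_halfSpace_ge (innerₛₗ ℝ w).isLinear (-1)
  rintro _ ⟨a, ha, c, hc, rfl⟩
  rw [ge_iff_le, inner_add_right]
  have ha' : -1 ≤ ⟪w, a⟫ := hhull ha
  linarith [inner_nonneg_of_mem_coneOf hR hc]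

end Polar

theorem stmt16 {n : ℕ} (S R : Finset (EuclideanSpace ℝ (Fin n))) (hS : S.Nonempty) :
    polarP (polarP (convexHull ℝ (S : Set (EuclideanSpace ℝ (Fin n))) + coneOf R)) =
      convexHull ℝ ((S : Set (EuclideanSpace ℝ (Fin n))) ∪ {0}) + coneOf R := by
  set Q := convexHull ℝ ((S : Set (EuclideanSpace ℝ (Fin n))) ∪ {0}) + coneOf R
  have hK : ((S : Set (EuclideanSpace ℝ (Fin n))) ∪ {0}).Finite :=
    S.finite_toSet.union (Set.finite_singleton 0)
  have hQ_closed : IsClosed Q :=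
    (isClosed_coneOf R).add_left_of_isCompact (hK.isCompact_convexHull ℝ)
  have hQ_convex : Convex ℝ Q := (convex_convexHull ℝ _).add (convex_coneOf R)
  have h0 : 0 ∈ Q := ⟨0, subset_convexHull ℝ _ (Or.inr rfl), 0, zero_mem_coneOf R, add_zero 0⟩
  rw [polarP_convexHull_add_coneOf hS R]
  exact (polarP_polarP_subset hQ_closed hQ_convex h0).antisymm (subset_polarP_polarP Q)
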